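/- arXiv:1302.1134 — 2 statements merged into one kernel-verified Lean document; each statement's English description precedes it below -/
import Mathlib

section
/- If commands from U never change the Γ_S component and queries in Q_S depend only on the Γ_S component, then for any command sequence in S∘U, every query q ∈ Q_S evaluated on the resulting state agrees with q evaluated on the state of S obtained by executing only the subsequence of Ψ_S-commands starting from the same initial Γ_S state. -/
/-- Execute a list of augmented-scheme commands: `S`-commands act on the
first component, `U`-commands on the whole pair. -/
def execA {ΓS ΓU : Type*} :
    List ((ΓS → ΓS) ⊕ (ΓS × ΓU → ΓS × ΓU)) → ΓS × ΓU → ΓS × ΓU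
  | [], p => p
  | (Sum.inl f) :: cs, p => execA cs (f p.1, p.2)
  | (Sum.inr e) :: cs, p => execA cs (e p)

/-- Execute a list of `S`-commands. -/
def execS {ΓS : Type*} : List (ΓS → ΓS) → ΓS → ΓS
  | [], γ => γ
  | f :: cs, γ => execS cs (f γ)

/-- The subsequence of `S`-commands of an augmented command sequence. -/
def filterS {ΓS ΓU : Type*} (cs : List ((ΓS → ΓS) ⊕ (ΓS × ΓU → ΓS × ΓU))) :
    List (ΓS → ΓS) :=
  cs.filterMap (fun c => match c with | Sum.inl f => some f | Sum.inr _ => none)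

section

variable {ΓS ΓU : Type*}

@[simp]
theorem filterS_cons_inr (e : ΓS × ΓU → ΓS × ΓU) (cs : List ((ΓS → ΓS) ⊕ (ΓS × ΓU → ΓS × ΓU))) :
    filterS (Sum.inr e :: cs) = filterS cs :=
  rfl

theorem fst_execA_eq_execS_filterS (cs : List ((ΓS → ΓS) ⊕ (ΓS × ΓU → ΓS × ΓU)))
    (hU : ∀ c ∈ cs, ∀ e, c = Sum.inr e → ∀ p : ΓS × ΓU, (e p).1 = p.1) (p : ΓS × ΓU) :
    (execA cs p).1 = execS (filterS cs) p.1 := by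
  induction cs generalizing p with
  | nil => rfl
  | cons c cs ih =>
    have hU_tail := fun c' hc' => hU c' (List.mem_cons_of_mem c hc')
    cases c with
    | inl f => exact ih hU_tail (f p.1, p.2)
    | inr e =>
      have he : (e p).1 = p.1 := hU _ List.mem_cons_self e rfl p
      rw [execA, filterS_cons_inr, ih hU_tail, he]

end

/-- queries of S on the result of an augmented run agree with
queries on the result of running only the S-subsequence. -/
theorem aug_queries_agree_with_filtered_run {ΓS ΓU : Type*}
    (QS : Set (ΓS → Bool))
    (cs : List ((ΓS → ΓS) ⊕ (ΓS × ΓU → ΓS × ΓU)))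
    (hU : ∀ c ∈ cs, ∀ e, c = Sum.inr e → ∀ p : ΓS × ΓU, (e p).1 = p.1)
    (γ0 : ΓS) (u : ΓU) :
    ∀ q ∈ QS, q (execA cs (γ0, u)).1 = q (execS (filterS cs) γ0) := by
  intro q _
  rw [fst_execA_eq_execS_filterS cs hU]
end

section
/- If σ is a state-matching implementation of workload W in scheme S, then for every start state γ₀ of W and every existential compositional security analysis instance (does there exist a reachable state satisfying a given Boolean combination of query answers?), the instance holds in W from γ₀ if and only if the image instance holds in S from σ_Γ(γ₀). -/
/-- An access control scheme: states, commands, and Boolean queries. -/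
structure Scheme where
  Γ : Type
  Ψ : Set (Γ → Γ)
  Q : Set (Γ → Bool)

/-- Single-step transition by some command of the scheme. -/
def Scheme.step (S : Scheme) (γ γ' : S.Γ) : Prop := ∃ f ∈ S.Ψ, γ' = f γ

/-- Reachability: reflexive-transitive closure of single steps. -/
def Scheme.reach (S : Scheme) : S.Γ → S.Γ → Prop := Relation.ReflTransGen S.step

/-- An implementation of scheme `W` in scheme `S`: maps states to states,
commands to finite command sequences, and queries to queries. -/
structure Impl (W S : Scheme) where
  mapΓ : W.Γ → S.Γ
  mapΨ : (W.Γ → W.Γ) → List (S.Γ → S.Γ)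
  mapQ : (W.Γ → Bool) → (S.Γ → Bool)
  mapΨ_mem : ∀ f ∈ W.Ψ, ∀ g ∈ mapΨ f, g ∈ S.Ψ
  mapQ_mem : ∀ q ∈ W.Q, mapQ q ∈ S.Q

/-- Query-equivalence of a `W`-state and an `S`-state under an implementation. -/
def Impl.equiv {W S : Scheme} (σ : Impl W S) (γw : W.Γ) (γs : S.Γ) : Prop :=
  ∀ q ∈ W.Q, q γw = σ.mapQ q γs

/-- State-matching implementation. -/
def Impl.StateMatching {W S : Scheme} (σ : Impl W S) : Prop :=
  ∀ γ : W.Γ,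
    (∀ γ1, W.reach γ γ1 → ∃ δ1, S.reach (σ.mapΓ γ) δ1 ∧ σ.equiv γ1 δ1) ∧
    (∀ δ1, S.reach (σ.mapΓ γ) δ1 → ∃ γ1, W.reach γ γ1 ∧ σ.equiv γ1 δ1)

theorem Impl.equiv.queryAnswers_eq {W S : Scheme} {σ : Impl W S} {γ : W.Γ} {δ : S.Γ}
    (h : σ.equiv γ δ) :
    (fun q : {q : W.Γ → Bool // q ∈ W.Q} => q.1 γ) = fun q => σ.mapQ q.1 δ :=
  funext fun q => h q.1 q.2

/-- a state-matching implementation preserves existential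
compositional security analysis instances. -/
theorem state_matching_preserves_existential_analysis
    (W S : Scheme) (σ : Impl W S) (hσ : σ.StateMatching)
    (γ0 : W.Γ) (φ : ({q : W.Γ → Bool // q ∈ W.Q} → Bool) → Bool) :
    (∃ γ, W.reach γ0 γ ∧ φ (fun q => q.1 γ) = true) ↔
    (∃ δ, S.reach (σ.mapΓ γ0) δ ∧ φ (fun q => σ.mapQ q.1 δ) = true) := by
  constructor
  · rintro ⟨γ, hγ, hφ⟩
    obtain ⟨δ, hδ, hequiv⟩ := (hσ γ0).1 γ hγ
    exact ⟨δ, hδ, hequiv.queryAnswers_eq ▸ hφ⟩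
  · rintro ⟨δ, hδ, hφ⟩
    obtain ⟨γ, hγ, hequiv⟩ := (hσ γ0).2 δ hδ
    exact ⟨γ, hγ, hequiv.queryAnswers_eq ▸ hφ⟩
end
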